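/- arXiv:1711.06906 — 7 statements merged into one kernel-verified Lean document; each statement's English description precedes it below -/
import Mathlib

section
/- Let G be a graph of order n > 2 with m edges, and suppose the second largest vertex degree Δ₂ satisfies Δ₂ < 2m/n. Then Δ₂ = d₃, i.e., the third largest degree of G equals the second largest degree. -/
open Finset

/-- The `k`-th largest element (1-indexed) of a multiset of naturals, with default `0`. -/
def kthLargestN (s : Multiset ℕ) (k : ℕ) : ℕ :=
  (s.sort (· ≤ ·)).reverse.getD (k - 1) 0

/-- `degSeq G k` is the `k`-th largest vertex degree (1-indexed) of `G`,
so `degSeq G 1 = Δ₁` and `degSeq G 2 = Δ₂`. -/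
def degSeq {n : ℕ} (G : SimpleGraph (Fin n)) [DecidableRel G.Adj] (k : ℕ) : ℕ :=
  kthLargestN (Finset.univ.val.map (fun v => G.degree v)) k

/-!
If `d₂ > d₃`, bound every degree from `d₃` on by `d₂ - 1` and `d₁` by `n - 1`:
the degree sum is then at most `(n - 1) + d₂ + (n - 2)(d₂ - 1) = (n - 1) d₂ + 1 ≤ n d₂`,
contradicting `n d₂ < 2m`.
-/

namespace List

theorem sum_le_length_mul_getD_one_of_getD_one_ne_getD_two {l : List ℕ}
    (hsorted : l.Pairwise (· ≥ ·)) (hlt : ∀ x ∈ l, x < l.length)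
    (hne : l.getD 1 0 ≠ l.getD 2 0) :
    l.sum ≤ l.length * l.getD 1 0 := by
  rcases l with _ | ⟨a, _ | ⟨b, _ | ⟨c, rest⟩⟩⟩
  · simp at hne
  · simp at hne
  · have := hlt a (by simp)
    simp only [getD_cons_succ, getD_cons_zero, getD_nil, length_cons, length_nil] at hne this ⊢
    simp only [sum_cons, sum_nil]
    omega
  · simp only [getD_cons_succ, getD_cons_zero] at hne ⊢
    simp only [pairwise_cons, mem_cons, forall_eq_or_imp] at hsorted
    obtain ⟨-, ⟨hcb, -⟩, hc, -⟩ := hsorted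
    have hc_lt_b : c < b := lt_of_le_of_ne hcb (Ne.symm hne)
    have ha : a < rest.length + 3 := hlt a (by simp)
    have hrest : rest.sum ≤ rest.length * c := by
      simpa [mul_comm] using sum_le_card_nsmul rest c hc
    have hrest' : rest.length * c ≤ rest.length * (b - 1) :=
      Nat.mul_le_mul_left _ (by omega)
    simp only [sum_cons, length_cons]
    nlinarith

end List

namespace SimpleGraph

variable {V : Type*} [Fintype V] (G : SimpleGraph V) [DecidableRel G.Adj]

def sortedDegrees : List ℕ :=
  ((univ.val.map fun v => G.degree v).sort (· ≤ ·)).reverse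

theorem pairwise_ge_sortedDegrees : G.sortedDegrees.Pairwise (· ≥ ·) := by
  rw [sortedDegrees, List.pairwise_reverse]
  exact Multiset.pairwise_sort _ _

theorem length_sortedDegrees : G.sortedDegrees.length = Fintype.card V := by
  simp [sortedDegrees, card_univ]

theorem lt_length_of_mem_sortedDegrees :
    ∀ d ∈ G.sortedDegrees, d < G.sortedDegrees.length := by
  intro d hd
  rw [sortedDegrees, List.mem_reverse, Multiset.mem_sort, Multiset.mem_map] at hd
  obtain ⟨v, -, rfl⟩ := hd
  rw [length_sortedDegrees]
  exact G.degree_lt_card_verts v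

theorem sum_sortedDegrees : G.sortedDegrees.sum = 2 * #G.edgeFinset := by
  rw [sortedDegrees, List.sum_reverse, ← Multiset.sum_coe, Multiset.sort_eq]
  exact G.sum_degrees_eq_twice_card_edges

end SimpleGraph

theorem degSeq_eq_getD_sortedDegrees {n : ℕ} (G : SimpleGraph (Fin n)) [DecidableRel G.Adj]
    (k : ℕ) : degSeq G k = G.sortedDegrees.getD (k - 1) 0 :=
  rfl

theorem stmt1_general {n : ℕ} (G : SimpleGraph (Fin n)) [DecidableRel G.Adj]
    (h : (degSeq G 2 : ℝ) < 2 * (G.edgeFinset.card : ℝ) / n) :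
    degSeq G 2 = degSeq G 3 := by
  have hn : 0 < n := by
    refine Nat.pos_of_ne_zero ?_
    rintro rfl
    simp only [CharP.cast_eq_zero, div_zero] at h
    exact (Nat.cast_nonneg _).not_gt h
  have hmul : n * degSeq G 2 < 2 * #G.edgeFinset := by
    rw [lt_div_iff₀ (by positivity), mul_comm] at h
    exact_mod_cast h
  simp only [degSeq_eq_getD_sortedDegrees] at hmul ⊢
  by_contra hne
  have hsum := List.sum_le_length_mul_getD_one_of_getD_one_ne_getD_two
    G.pairwise_ge_sortedDegrees G.lt_length_of_mem_sortedDegrees hne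
  rw [G.sum_sortedDegrees, G.length_sortedDegrees, Fintype.card_fin] at hsum
  exact hsum.not_gt hmul

/-- Let `G` be a graph of order `n > 2` with `m` edges and suppose
`Δ₂ < 2m/n`. Then `Δ₂ = d₃`. -/
theorem stmt1 {n : ℕ} (hn : 2 < n) (G : SimpleGraph (Fin n)) [DecidableRel G.Adj]
    (h : (degSeq G 2 : ℝ) < 2 * (G.edgeFinset.card : ℝ) / n) :
    degSeq G 2 = degSeq G 3 :=
  stmt1_general G h
end

section
/- Let G be a graph of order n > 2 with m edges, and suppose the second largest vertex degree Δ₂ satisfies Δ₂ < 2m/n. Let k (2 ≤ k ≤ n) be the largest positive integer such that d₂ = d₃ = ⋯ = d_k = Δ₂. Then Δ₁ > Δ₂ + n - k. -/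
open Finset

/-!
Summing the degree sequence gives `2m > n Δ₂`. On the other hand `d₁` is followed by `k - 1`
copies of `Δ₂`, and by maximality of `k` each of the remaining `n - k` degrees is at most
`Δ₂ - 1`, so `2m ≤ Δ₁ + (n - 1) Δ₂ - (n - k)`. Comparing the two bounds gives `Δ₁ > Δ₂ + n - k`.
-/

theorem sum_range_length_getD (l : List ℕ) :
    ∑ i ∈ range l.length, l.getD i 0 = l.sum := by
  induction l with
  | nil => simp
  | cons a t ih =>
    rw [List.length_cons, sum_range_succ']
    simp only [List.getD_cons_succ, List.getD_cons_zero, ih, List.sum_cons]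
    omega

theorem sum_kthLargestN (s : Multiset ℕ) :
    ∑ i ∈ Icc 1 s.card, kthLargestN s i = s.sum := by
  have := sum_range_length_getD (s.sort (· ≤ ·)).reverse
  rw [List.length_reverse, Multiset.length_sort, List.sum_reverse, ← Multiset.sum_coe,
    Multiset.sort_eq] at this
  rw [← this, ← Ico_add_one_right_eq_Icc, sum_Ico_eq_sum_range, Nat.add_sub_cancel]
  simp only [kthLargestN, Nat.add_sub_cancel_left]

theorem kthLargestN_antitone (s : Multiset ℕ) {i j : ℕ} (hi : 1 ≤ i) (hij : i ≤ j) :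
    kthLargestN s j ≤ kthLargestN s i := by
  set L := (s.sort (· ≤ ·)).reverse
  have hsorted : L.Pairwise (fun a b => b ≤ a) := by
    simp [L, List.pairwise_reverse]
  show L.getD (j - 1) 0 ≤ L.getD (i - 1) 0
  by_cases hj : j - 1 < L.length
  · rw [List.getD_eq_getElem _ _ hj, List.getD_eq_getElem _ _ (by omega)]
    rcases (show i - 1 ≤ j - 1 by omega).eq_or_lt with heq | hlt
    · simp [heq]
    · exact hsorted.rel_get_of_lt hlt
  · rw [List.getD_eq_default _ _ (by omega)]
    exact Nat.zero_le _

section DegreeSequence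

variable {n : ℕ} (G : SimpleGraph (Fin n)) [DecidableRel G.Adj]

theorem sum_degSeq : ∑ i ∈ Icc 1 n, degSeq G i = 2 * #G.edgeFinset := by
  have := sum_kthLargestN (univ.val.map fun v => G.degree v)
  rw [Multiset.card_map, card_val, card_univ, Fintype.card_fin] at this
  rw [← G.sum_degrees_eq_twice_card_edges]
  exact this

theorem degSeq_antitone {i j : ℕ} (hi : 1 ≤ i) (hij : i ≤ j) : degSeq G j ≤ degSeq G i :=
  kthLargestN_antitone _ hi hij

end DegreeSequence

theorem lt_of_isGreatest_plateau {d : ℕ → ℕ} {n k : ℕ}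
    (hanti : ∀ i j, 1 ≤ i → i ≤ j → d j ≤ d i)
    (hk : IsGreatest {j | 2 ≤ j ∧ j ≤ n ∧ ∀ i, 2 ≤ i → i ≤ j → d i = d 2} k)
    {i : ℕ} (hki : k < i) (hin : i ≤ n) : d i < d 2 := by
  obtain ⟨⟨hk2, -, hconst⟩, hmax⟩ := hk
  have hne : d (k + 1) ≠ d 2 := by
    intro heq
    have : k + 1 ≤ k := hmax ⟨by omega, by omega, fun j hj2 hjk => by
      rcases (Nat.le_succ_iff.mp hjk) with hjk | rfl
      · exact hconst j hj2 hjk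
      · exact heq⟩
    omega
  have := hanti 2 (k + 1) (by omega) (by omega)
  have := hanti (k + 1) i (by omega) hki
  omega

theorem sum_Icc_add_le_of_plateau (d : ℕ → ℕ) {n k : ℕ} (hk2 : 2 ≤ k) (hkn : k ≤ n)
    (hconst : ∀ i, 2 ≤ i → i ≤ k → d i = d 2) (hlt : ∀ i, k < i → i ≤ n → d i < d 2) :
    ∑ i ∈ Icc 1 n, d i + (n - k) ≤ d 1 + (n - 1) * d 2 := by
  have hsplit : ∑ i ∈ Icc 1 n, d i
      = ∑ i ∈ Ioc 0 1, d i + ∑ i ∈ Ioc 1 k, d i + ∑ i ∈ Ioc k n, d i := by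
    rw [sum_Ioc_consecutive _ zero_le_one (by omega), sum_Ioc_consecutive _ (by omega) hkn]
    rfl
  have hplateau : ∑ i ∈ Ioc 1 k, d i = (k - 1) * d 2 := by
    rw [sum_congr rfl fun i hi => hconst i (mem_Ioc.mp hi).1 (mem_Ioc.mp hi).2,
      sum_const, Nat.card_Ioc, smul_eq_mul]
  have htail : ∑ i ∈ Ioc k n, (d i + 1) ≤ (n - k) * d 2 := by
    simpa using sum_le_sum fun i hi =>
      Nat.succ_le_of_lt (hlt i (mem_Ioc.mp hi).1 (mem_Ioc.mp hi).2)
  rw [sum_add_distrib, sum_const, Nat.card_Ioc, smul_eq_mul, mul_one] at htail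
  have hcount : (k - 1) * d 2 + (n - k) * d 2 = (n - 1) * d 2 := by
    rw [← add_mul]; congr 1; omega
  simp only [hsplit, hplateau, Nat.Ioc_succ_singleton, zero_add, sum_singleton]
  omega

theorem stmt2_general {n k : ℕ} (G : SimpleGraph (Fin n)) [DecidableRel G.Adj]
    (h : (degSeq G 2 : ℝ) < 2 * (G.edgeFinset.card : ℝ) / n)
    (hk : IsGreatest {j | 2 ≤ j ∧ j ≤ n ∧ ∀ i, 2 ≤ i → i ≤ j → degSeq G i = degSeq G 2} k) :
    (degSeq G 1 : ℝ) > (degSeq G 2 : ℝ) + (n : ℝ) - (k : ℝ) := by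
  obtain ⟨hk2, hkn, hconst⟩ := hk.1
  have hbound := sum_Icc_add_le_of_plateau (degSeq G) hk2 hkn hconst
    fun i => lt_of_isGreatest_plateau (fun _ _ => degSeq_antitone G) hk
  rw [sum_degSeq] at hbound
  have hn : (0 : ℝ) < n := by exact_mod_cast (show 0 < n by omega)
  have havg : (n : ℝ) * degSeq G 2 < 2 * #G.edgeFinset := by
    rw [lt_div_iff₀ hn] at h
    linarith
  have hbound' : ((2 * #G.edgeFinset + (n - k) : ℕ) : ℝ)
      ≤ ((degSeq G 1 + (n - 1) * degSeq G 2 : ℕ) : ℝ) := by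
    exact_mod_cast hbound
  push_cast [Nat.cast_sub hkn, Nat.cast_sub (show 1 ≤ n by omega)] at hbound'
  linarith

/-- Let `G` be a graph of order `n > 2` with `m` edges, `Δ₂ < 2m/n`, and
let `k` (`2 ≤ k ≤ n`) be the largest positive integer with `d₂ = ⋯ = d_k = Δ₂`.
Then `Δ₁ > Δ₂ + n - k`. -/
theorem stmt2 {n k : ℕ} (hn : 2 < n) (G : SimpleGraph (Fin n)) [DecidableRel G.Adj]
    (h : (degSeq G 2 : ℝ) < 2 * (G.edgeFinset.card : ℝ) / n)
    (hk : IsGreatest {j | 2 ≤ j ∧ j ≤ n ∧ ∀ i, 2 ≤ i → i ≤ j → degSeq G i = degSeq G 2} k) :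
    (degSeq G 1 : ℝ) > (degSeq G 2 : ℝ) + (n : ℝ) - (k : ℝ) :=
  stmt2_general G h hk
end

section
/- Let G be a graph of order n > 2 with m edges, and suppose the second largest vertex degree Δ₂ satisfies Δ₂ < 2m/n. Let k (2 ≤ k ≤ n) be the largest positive integer such that d₂ = d₃ = ⋯ = d_k = Δ₂. Then k ≥ Δ₂ + n + 1 - Δ₁ and Δ₂ + n + 1 - Δ₁ ≥ Δ₂ + 2; in particular k ≥ Δ₂ + 2. -/
/-!
List the degrees as d₁ ≥ d₂ ≥ ⋯ ≥ dₙ. The entries d₂, …, d_k equal Δ₂ and, by maximality of `k`,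
the later ones are at most Δ₂ - 1, so 2m = ∑ dᵢ ≤ Δ₁ + (n - 1)Δ₂ - (n - k). Combined with
nΔ₂ < 2m this gives Δ₂ + n + 1 ≤ Δ₁ + k, and Δ₁ ≤ n - 1 gives the second inequality.
-/

open Finset

theorem antitone_kthLargestN (s : Multiset ℕ) : Antitone (kthLargestN s) := by
  intro i j hij
  have hsorted : (s.sort (· ≤ ·)).reverse.SortedGE :=
    List.sortedGE_reverse.2 (Multiset.pairwise_sort s _).sortedLE
  unfold kthLargestN
  by_cases hj : j - 1 < (s.sort (· ≤ ·)).reverse.length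
  · rw [List.getD_eq_getElem _ _ hj, List.getD_eq_getElem _ _ (by omega)]
    exact hsorted.getElem_ge_getElem_of_le (by omega)
  · rw [List.getD_eq_default _ _ (by omega)]
    exact Nat.zero_le _

theorem kthLargestN_mem {s : Multiset ℕ} {k : ℕ} (hk : k - 1 < Multiset.card s) :
    kthLargestN s k ∈ s := by
  rw [kthLargestN, List.getD_eq_getElem _ _ (by simpa using hk)]
  exact (Multiset.mem_sort _).1 (List.mem_reverse.1 (List.getElem_mem _))

theorem sum_range_kthLargestN_succ (s : Multiset ℕ) :
    ∑ i ∈ range (Multiset.card s), kthLargestN s (i + 1) = s.sum := by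
  set l := (s.sort (· ≤ ·)).reverse
  have hl : l.length = Multiset.card s := by simp [l]
  calc ∑ i ∈ range (Multiset.card s), kthLargestN s (i + 1)
      = ∑ i : Fin l.length, l[i.1] := by
        rw [hl.symm, ← Fin.sum_univ_eq_sum_range]
        exact Fintype.sum_congr _ _ fun i => List.getD_eq_getElem _ _ i.2
    _ = s.sum := by
        rw [Fin.sum_univ_getElem, List.sum_reverse, ← Multiset.sum_coe, Multiset.sort_eq]

section degSeq

variable {n : ℕ} (G : SimpleGraph (Fin n)) [DecidableRel G.Adj]

theorem antitone_degSeq : Antitone (degSeq G) := antitone_kthLargestN _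

theorem degSeq_le_sub_one (k : ℕ) : degSeq G k ≤ n - 1 := by
  by_cases hk : k - 1 < n
  · obtain ⟨v, -, hv⟩ := Multiset.mem_map.1
      (kthLargestN_mem (s := univ.val.map fun v => G.degree v) (by simpa using hk))
    rw [degSeq, ← hv]
    have := G.degree_lt_card_verts v
    simp only [Fintype.card_fin] at this
    omega
  · rw [degSeq, kthLargestN, List.getD_eq_default _ _ (by simp; omega)]
    exact Nat.zero_le _

theorem sum_range_degSeq_succ : ∑ i ∈ range n, degSeq G (i + 1) = 2 * #G.edgeFinset := by
  have := sum_range_kthLargestN_succ (univ.val.map fun v => G.degree v)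
  rw [Multiset.card_map, card_val, card_univ, Fintype.card_fin] at this
  rw [← G.sum_degrees_eq_twice_card_edges]
  exact this

end degSeq

theorem sum_range_add_sub_le {d : ℕ → ℕ} {c k n : ℕ} (hk : 1 ≤ k) (hkn : k ≤ n)
    (hmid : ∀ i ∈ Ico 1 k, d i ≤ c) (htail : ∀ i ∈ Ico k n, d i < c) :
    ∑ i ∈ range n, d i + (n - k) ≤ d 0 + (n - 1) * c := by
  have hsplit : ∑ i ∈ range n, d i = d 0 + ∑ i ∈ Ico 1 k, d i + ∑ i ∈ Ico k n, d i := by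
    rw [range_eq_Ico, ← sum_Ico_consecutive _ (Nat.zero_le k) hkn, sum_eq_sum_Ico_succ_bot hk]
  have hmid_sum : ∑ i ∈ Ico 1 k, d i ≤ (k - 1) * c := by
    simpa using sum_le_sum hmid
  have htail_sum : ∑ i ∈ Ico k n, (d i + 1) ≤ (n - k) * c := by
    simpa using sum_le_sum fun i hi => Nat.succ_le_of_lt (htail i hi)
  rw [sum_add_distrib, sum_const, Nat.card_Ico, smul_eq_mul, mul_one] at htail_sum
  have hn : n - 1 = (k - 1) + (n - k) := by omega
  rw [hsplit, hn, add_mul]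
  omega

theorem add_add_one_le_of_mul_lt_sum {d : ℕ → ℕ} {c k n : ℕ} (hk : 1 ≤ k) (hkn : k ≤ n)
    (hmid : ∀ i ∈ Ico 1 k, d i ≤ c) (htail : ∀ i ∈ Ico k n, d i < c)
    (hsum : n * c < ∑ i ∈ range n, d i) :
    c + n + 1 ≤ d 0 + k := by
  have := sum_range_add_sub_le hk hkn hmid htail
  have hn : n * c = (n - 1) * c + c := by
    rw [← Nat.succ_mul]; congr 1; omega
  omega

theorem Antitone.lt_of_isGreatest_run {f : ℕ → ℕ} (hf : Antitone f) {n k : ℕ}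
    (hk : IsGreatest {j | 2 ≤ j ∧ j ≤ n ∧ ∀ i, 2 ≤ i → i ≤ j → f i = f 2} k)
    {i : ℕ} (hki : k < i) (hin : i ≤ n) : f i < f 2 := by
  obtain ⟨⟨hk2, -, hkeq⟩, hkmax⟩ := hk
  have hne : f (k + 1) ≠ f 2 := fun heq => by
    have : k + 1 ≤ k := hkmax ⟨by omega, by omega, fun j hj2 hjk => by
      rcases Nat.lt_or_eq_of_le hjk with hjk | rfl
      · exact hkeq j hj2 (by omega)
      · exact heq⟩
    omega
  exact (hf hki).trans_lt (lt_of_le_of_ne (hf (by omega)) hne)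

theorem stmt3_general {n k : ℕ} (G : SimpleGraph (Fin n)) [DecidableRel G.Adj]
    (h : (degSeq G 2 : ℝ) < 2 * (G.edgeFinset.card : ℝ) / n)
    (hk : IsGreatest {j | 2 ≤ j ∧ j ≤ n ∧ ∀ i, 2 ≤ i → i ≤ j → degSeq G i = degSeq G 2} k) :
    (k : ℝ) ≥ (degSeq G 2 : ℝ) + (n : ℝ) + 1 - (degSeq G 1 : ℝ) ∧
      (degSeq G 2 : ℝ) + (n : ℝ) + 1 - (degSeq G 1 : ℝ) ≥ (degSeq G 2 : ℝ) + 2 ∧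
      (k : ℝ) ≥ (degSeq G 2 : ℝ) + 2 := by
  obtain ⟨hk2, hkn, hkeq⟩ := hk.1
  have hn : 0 < n := by omega
  have havg : n * degSeq G 2 < ∑ i ∈ range n, degSeq G (i + 1) := by
    rw [sum_range_degSeq_succ, ← Nat.cast_lt (α := ℝ)]
    push_cast
    rwa [lt_div_iff₀ (by exact_mod_cast hn), mul_comm] at h
  have hmid : ∀ i ∈ Ico 1 k, degSeq G (i + 1) ≤ degSeq G 2 := fun i hi => by
    rw [mem_Ico] at hi
    exact (hkeq (i + 1) (by omega) (by omega)).le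
  have htail : ∀ i ∈ Ico k n, degSeq G (i + 1) < degSeq G 2 := fun i hi => by
    rw [mem_Ico] at hi
    exact (antitone_degSeq G).lt_of_isGreatest_run hk (by omega) (by omega)
  have hkey : degSeq G 2 + n + 1 ≤ degSeq G 1 + k :=
    add_add_one_le_of_mul_lt_sum (d := fun i => degSeq G (i + 1)) (by omega) hkn hmid htail havg
  have hΔ₁ : degSeq G 1 + 1 ≤ n := by have := degSeq_le_sub_one G 1; omega
  have hkey' : (degSeq G 2 : ℝ) + n + 1 ≤ degSeq G 1 + k := by exact_mod_cast hkey
  have hΔ₁' : (degSeq G 1 : ℝ) + 1 ≤ n := by exact_mod_cast hΔ₁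
  refine ⟨?_, ?_, ?_⟩ <;> linarith

/-- Let `G` be a graph of order `n > 2` with `m` edges, `Δ₂ < 2m/n`, and
let `k` (`2 ≤ k ≤ n`) be the largest positive integer with `d₂ = ⋯ = d_k = Δ₂`.
Then `k ≥ Δ₂ + n + 1 - Δ₁ ≥ Δ₂ + 2`; in particular `k ≥ Δ₂ + 2`. -/
theorem stmt3 {n k : ℕ} (hn : 2 < n) (G : SimpleGraph (Fin n)) [DecidableRel G.Adj]
    (h : (degSeq G 2 : ℝ) < 2 * (G.edgeFinset.card : ℝ) / n)
    (hk : IsGreatest {j | 2 ≤ j ∧ j ≤ n ∧ ∀ i, 2 ≤ i → i ≤ j → degSeq G i = degSeq G 2} k) :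
    (k : ℝ) ≥ (degSeq G 2 : ℝ) + (n : ℝ) + 1 - (degSeq G 1 : ℝ) ∧
      (degSeq G 2 : ℝ) + (n : ℝ) + 1 - (degSeq G 1 : ℝ) ≥ (degSeq G 2 : ℝ) + 2 ∧
      (k : ℝ) ≥ (degSeq G 2 : ℝ) + 2 :=
  stmt3_general G h hk
end

section
/- For G ≅ K_{1,n-r-1} ∪ r·K₁ of order n with m edges, where 0 ≤ r ≤ ⌈n/2⌉ - 2 or r = n - 2, one has μ₂(G) < 2m/n. -/
open Finset

/-- The `k`-th largest element (1-indexed) of a multiset of reals, with default `0`. -/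
noncomputable def kthLargestR (s : Multiset ℝ) (k : ℕ) : ℝ :=
  (s.sort (· ≤ ·)).reverse.getD (k - 1) 0

/-- `muL G k` is the `k`-th largest Laplacian eigenvalue (with multiplicity, 1-indexed)
of the graph `G`, i.e. the `k`-th largest root of the characteristic polynomial of the
Laplacian matrix `L(G) = D(G) - A(G)`. -/
noncomputable def muL {n : ℕ} (G : SimpleGraph (Fin n)) [DecidableRel G.Adj] (k : ℕ) : ℝ :=
  kthLargestR ((G.lapMatrix ℝ).charpoly.roots) k

/-- The disjoint union `K_{1,n-r-1} ∪ r·K₁` on `n` vertices: vertex `0` is the centre of a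
star whose leaves are the vertices `1,…,n-r-1`, and the remaining `r` vertices are isolated. -/
def starWithIsolated (n r : ℕ) : SimpleGraph (Fin n) :=
  SimpleGraph.fromRel (fun u v => u.val = 0 ∧ 1 ≤ v.val ∧ v.val ≤ n - r - 1)

open Polynomial Matrix

lemma charmatrix_diagonal {N : ℕ} (d : Fin N → ℝ) :
    charmatrix (Matrix.diagonal d) = Matrix.diagonal (fun i => X - C (d i)) := by
  ext i j
  by_cases h : i = j
  · subst h; simp [charmatrix_apply]
  · simp [charmatrix_apply_ne _ _ _ h, Matrix.diagonal_apply_ne _ h, Matrix.diagonal_apply_ne' _ h]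

lemma charpoly_eq_prod_eigs {N : ℕ} (A : Matrix (Fin N) (Fin N) ℝ) (hA : A.IsHermitian) :
    A.charpoly = ∏ i, (X - C (hA.eigenvalues i)) := by
  have hU1 : (hA.eigenvectorUnitary : Matrix (Fin N) (Fin N) ℝ) *
      (star hA.eigenvectorUnitary : Matrix (Fin N) (Fin N) ℝ) = 1 := by
    exact_mod_cast hA.eigenvectorUnitary.2.2
  have hU2 : (star hA.eigenvectorUnitary : Matrix (Fin N) (Fin N) ℝ) *
      (hA.eigenvectorUnitary : Matrix (Fin N) (Fin N) ℝ) = 1 := by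
    exact_mod_cast hA.eigenvectorUnitary.2.1
  set U : Matrix (Fin N) (Fin N) ℝ := (hA.eigenvectorUnitary : Matrix (Fin N) (Fin N) ℝ) with hUdef
  set D : Matrix (Fin N) (Fin N) ℝ := Matrix.diagonal hA.eigenvalues with hD
  have hspec : A = U * D * star U := by
    have := hA.spectral_theorem
    simpa [RCLike.ofReal_real_eq_id] using this
  have hcm : charmatrix A = (C : ℝ →+* ℝ[X]).mapMatrix U * charmatrix D *
      (C : ℝ →+* ℝ[X]).mapMatrix (star U) := by
    rw [charmatrix, charmatrix, hspec]
    rw [mul_sub, sub_mul]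
    congr 1
    · rw [← (scalar_commute (X : ℝ[X]) (Commute.all X) _).eq, mul_assoc, ← RingHom.map_mul,
        hU1, RingHom.map_one, mul_one]
    · simp only [← RingHom.map_mul]
  rw [Matrix.charpoly, hcm, det_mul, det_mul, mul_comm, ← mul_assoc, ← det_mul,
    ← RingHom.map_mul, hU2, RingHom.map_one, det_one, one_mul, hD, charmatrix_diagonal,
    det_diagonal]

lemma trace_conj_eq {N : ℕ} (U V M : Matrix (Fin N) (Fin N) ℝ) (h : V * U = 1) :
    (U * M * V).trace = M.trace := by
  rw [trace_mul_comm, ← mul_assoc, h, one_mul]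

lemma trace_eq_sum_eigs {N : ℕ} (A : Matrix (Fin N) (Fin N) ℝ) (hA : A.IsHermitian) :
    A.trace = ∑ i, hA.eigenvalues i := by
  have hU2 : (star hA.eigenvectorUnitary : Matrix (Fin N) (Fin N) ℝ) *
      (hA.eigenvectorUnitary : Matrix (Fin N) (Fin N) ℝ) = 1 := by
    exact_mod_cast hA.eigenvectorUnitary.2.1
  have hspec : A = (hA.eigenvectorUnitary : Matrix (Fin N) (Fin N) ℝ) *
      Matrix.diagonal hA.eigenvalues * (star hA.eigenvectorUnitary : Matrix (Fin N) (Fin N) ℝ) := by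
    have := hA.spectral_theorem
    simpa [RCLike.ofReal_real_eq_id] using this
  conv_lhs => rw [hspec]
  rw [trace_conj_eq _ _ _ hU2, trace_diagonal]

lemma trace_sq_eq_sum_sq_eigs {N : ℕ} (A : Matrix (Fin N) (Fin N) ℝ) (hA : A.IsHermitian) :
    (A * A).trace = ∑ i, hA.eigenvalues i ^ 2 := by
  have hU2 : (star hA.eigenvectorUnitary : Matrix (Fin N) (Fin N) ℝ) *
      (hA.eigenvectorUnitary : Matrix (Fin N) (Fin N) ℝ) = 1 := by
    exact_mod_cast hA.eigenvectorUnitary.2.1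
  set U : Matrix (Fin N) (Fin N) ℝ := (hA.eigenvectorUnitary : Matrix (Fin N) (Fin N) ℝ)
  set Dg : Matrix (Fin N) (Fin N) ℝ := Matrix.diagonal hA.eigenvalues with hDg
  have hspec : A = U * Dg * star U := by
    have := hA.spectral_theorem
    simpa [RCLike.ofReal_real_eq_id] using this
  have hAA : A * A = U * (Dg * Dg) * star U := by
    rw [hspec, ← mul_assoc (U * Dg * star U) (U * Dg) (star U), mul_assoc (U * Dg) (star U) (U * Dg),
      ← mul_assoc (star U) U Dg, hU2, one_mul, mul_assoc U Dg Dg]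
  rw [hAA, trace_conj_eq _ _ _ hU2, hDg, diagonal_mul_diagonal, trace_diagonal]
  simp [sq]

lemma roots_prod_eigs {N : ℕ} (μ : Fin N → ℝ) :
    (∏ i, (X - C (μ i))).roots = (Finset.univ.val.map μ) := by
  have := Polynomial.roots_multiset_prod_X_sub_C (Finset.univ.val.map μ)
  rw [← this]
  congr 1
  rw [Multiset.map_map]
  rfl


instance swiDec (n r : ℕ) : DecidableRel (starWithIsolated n r).Adj := fun u v =>
  decidable_of_iff _ (SimpleGraph.fromRel_adj _ u v).symm

section facts
variable {n r : ℕ} (hn : r + 2 ≤ n)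

lemma swi_adj {u v : Fin n} : (starWithIsolated n r).Adj u v ↔
    (u.val = 0 ∧ 1 ≤ v.val ∧ v.val ≤ n - r - 1) ∨
    (v.val = 0 ∧ 1 ≤ u.val ∧ u.val ≤ n - r - 1) := by
  rw [starWithIsolated, SimpleGraph.fromRel_adj]
  constructor
  · rintro ⟨-, h⟩; exact h
  · rintro h
    refine ⟨?_, h⟩
    rcases h with ⟨h0, h1, -⟩ | ⟨h0, h1, -⟩ <;>
    · intro he
      subst he
      omega

include hn

lemma npos : 0 < n := by omega

lemma swi_neighbor_zero :
    (starWithIsolated n r).neighborFinset ⟨0, npos hn⟩ =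
      univ.filter (fun v : Fin n => 1 ≤ v.val ∧ v.val ≤ n - r - 1) := by
  ext v
  simp only [SimpleGraph.mem_neighborFinset, mem_filter, mem_univ, true_and, swi_adj]
  omega

lemma swi_neighbor_leaf {k : Fin n} (h1 : 1 ≤ k.val) (h2 : k.val ≤ n - r - 1) :
    (starWithIsolated n r).neighborFinset k = {⟨0, npos hn⟩} := by
  ext v
  simp only [SimpleGraph.mem_neighborFinset, mem_singleton, swi_adj, Fin.ext_iff]
  omega

omit hn in
lemma swi_neighbor_isolated {k : Fin n} (h2 : n - r - 1 < k.val) :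
    (starWithIsolated n r).neighborFinset k = ∅ := by
  ext v
  simp only [SimpleGraph.mem_neighborFinset, notMem_empty, iff_false, swi_adj]
  omega

lemma card_filter_leaves :
    (univ.filter (fun v : Fin n => 1 ≤ v.val ∧ v.val ≤ n - r - 1)).card = n - r - 1 := by
  have h : (univ.filter (fun v : Fin n => 1 ≤ v.val ∧ v.val ≤ n - r - 1)).card
      = (Finset.Icc 1 (n - r - 1)).card := by
    apply Finset.card_bij (fun v _ => v.val)
    · intro a ha; simp only [mem_filter, mem_univ, true_and] at ha; simp only [Finset.mem_Icc]; omega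
    · intro a _ b _ h; exact Fin.ext h
    · intro b hb
      simp only [Finset.mem_Icc] at hb
      exact ⟨⟨b, by omega⟩, by simp only [mem_filter, mem_univ, true_and]; omega, rfl⟩
  rw [h, Nat.card_Icc]; omega

end facts

section facts2
variable {n r : ℕ} (hn : r + 2 ≤ n)

local notation "s" => n - r - 1

include hn

lemma swi_degree_zero : (starWithIsolated n r).degree ⟨0, npos hn⟩ = s := by
  rw [SimpleGraph.degree, swi_neighbor_zero hn, card_filter_leaves hn]

lemma swi_degree_leaf {k : Fin n} (h1 : 1 ≤ k.val) (h2 : k.val ≤ s) : (starWithIsolated n r).degree k = 1 := by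
  rw [SimpleGraph.degree, swi_neighbor_leaf hn h1 h2, card_singleton]

omit hn in
lemma swi_degree_isolated {k : Fin n} (h2 : s < k.val) : (starWithIsolated n r).degree k = 0 := by
  rw [SimpleGraph.degree, swi_neighbor_isolated h2, card_empty]

lemma sum_split {M : Type*} [AddCommMonoid M] (f : Fin n → M) :
    ∑ i, f i = f ⟨0, npos hn⟩ +
      (∑ i ∈ univ.filter (fun v : Fin n => 1 ≤ v.val ∧ v.val ≤ s), f i +
       ∑ i ∈ univ.filter (fun v : Fin n => s < v.val), f i) := by
  classical
  rw [← Finset.sum_filter_add_sum_filter_not univ (fun v : Fin n => v.val = 0) f]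
  congr 1
  · have h0 : univ.filter (fun v : Fin n => v.val = 0) = {(⟨0, npos hn⟩ : Fin n)} := by
      ext v; simp [Fin.ext_iff]
    rw [h0, Finset.sum_singleton]
  · rw [← Finset.sum_filter_add_sum_filter_not
      (univ.filter (fun v : Fin n => ¬v.val = 0)) (fun v : Fin n => v.val ≤ s) f]
    congr 1
    · congr 1
      rw [Finset.filter_filter]
      apply Finset.filter_congr
      intro v _
      omega
    · congr 1
      rw [Finset.filter_filter]
      apply Finset.filter_congr
      intro v _
      omega

lemma swi_sum_degrees : ∑ i, (starWithIsolated n r).degree i = 2 * s := by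
  rw [sum_split hn (fun i => (starWithIsolated n r).degree i), swi_degree_zero hn]
  have h1 : ∑ i ∈ univ.filter (fun v : Fin n => 1 ≤ v.val ∧ v.val ≤ s), (starWithIsolated n r).degree i
      = ∑ i ∈ univ.filter (fun v : Fin n => 1 ≤ v.val ∧ v.val ≤ s), 1 := by
    apply Finset.sum_congr rfl
    intro i hi
    simp only [mem_filter, mem_univ, true_and] at hi
    exact swi_degree_leaf hn hi.1 hi.2
  have h2 : ∑ i ∈ univ.filter (fun v : Fin n => s < v.val), (starWithIsolated n r).degree i = 0 := by
    apply Finset.sum_eq_zero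
    intro i hi
    simp only [mem_filter, mem_univ, true_and] at hi
    exact swi_degree_isolated hi
  rw [h1, h2, Finset.sum_const, smul_eq_mul, mul_one, card_filter_leaves hn]
  omega

lemma swi_edgecard : (starWithIsolated n r).edgeFinset.card = s := by
  have h := SimpleGraph.sum_degrees_eq_twice_card_edges (starWithIsolated n r)
  rw [swi_sum_degrees hn] at h
  omega

end facts2

section facts3
variable {n r : ℕ} (hn : r + 2 ≤ n)

local notation "s" => n - r - 1

lemma lap_entry (G : SimpleGraph (Fin n)) [DecidableRel G.Adj] (i j : Fin n) :
    (G.lapMatrix ℝ) i j = (if i = j then (G.degree i : ℝ) else 0) - (if G.Adj i j then 1 else 0) := by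
  simp [SimpleGraph.lapMatrix, SimpleGraph.degMatrix, Matrix.diagonal_apply]

lemma lap_diag (G : SimpleGraph (Fin n)) [DecidableRel G.Adj] (i : Fin n) :
    (G.lapMatrix ℝ) i i = (G.degree i : ℝ) := by
  simp [lap_entry, SimpleGraph.irrefl]

lemma lap_rowsum_sq (G : SimpleGraph (Fin n)) [DecidableRel G.Adj] (i : Fin n) :
    ∑ j, ((G.lapMatrix ℝ) i j)^2 = (G.degree i : ℝ)^2 + (G.degree i : ℝ) := by
  have h : ∀ j, ((G.lapMatrix ℝ) i j)^2 =
      (if i = j then (G.degree i : ℝ)^2 else 0) + (if G.Adj i j then 1 else 0) := by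
    intro j
    by_cases hij : i = j
    · subst hij; simp [lap_entry, SimpleGraph.irrefl]
    · by_cases ha : G.Adj i j <;> simp [lap_entry, hij, ha]
  rw [Finset.sum_congr rfl (fun j _ => h j), Finset.sum_add_distrib, Finset.sum_ite_eq univ i,
    if_pos (mem_univ i), ← SimpleGraph.degree_eq_sum_if_adj]

lemma lap_trace (G : SimpleGraph (Fin n)) [DecidableRel G.Adj] :
    (G.lapMatrix ℝ).trace = ((∑ i, G.degree i : ℕ) : ℝ) := by
  rw [Matrix.trace]
  push_cast
  exact Finset.sum_congr rfl (fun i _ => lap_diag G i)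

lemma lap_trace_sq (G : SimpleGraph (Fin n)) [DecidableRel G.Adj] :
    ((G.lapMatrix ℝ) * (G.lapMatrix ℝ)).trace = ∑ i, ((G.degree i : ℝ)^2 + (G.degree i : ℝ)) := by
  have hsym : ∀ i j, (G.lapMatrix ℝ) j i = (G.lapMatrix ℝ) i j := by
    intro i j
    have h := G.isSymm_lapMatrix (R := ℝ)
    calc (G.lapMatrix ℝ) j i = (G.lapMatrix ℝ)ᵀ i j := rfl
    _ = (G.lapMatrix ℝ) i j := by rw [h]
  rw [Matrix.trace]
  apply Finset.sum_congr rfl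
  intro i _
  rw [Matrix.diag_apply, Matrix.mul_apply, ← lap_rowsum_sq G i]
  exact Finset.sum_congr rfl (fun j _ => by rw [hsym i j, sq])

include hn

lemma swi_trace : ((starWithIsolated n r).lapMatrix ℝ).trace = 2 * (s : ℝ) := by
  have hcast : ((n - r - 1 : ℕ) : ℝ) = (n:ℝ) - (r:ℝ) - 1 := by
    rw [Nat.cast_sub (by omega), Nat.cast_sub (by omega)]
    norm_num
  rw [lap_trace, swi_sum_degrees hn, Nat.cast_mul, hcast]
  norm_num

lemma swi_trace_sq : (((starWithIsolated n r).lapMatrix ℝ) * ((starWithIsolated n r).lapMatrix ℝ)).trace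
    = (s : ℝ)^2 + 3 * (s : ℝ) := by
  rw [lap_trace_sq]
  rw [sum_split hn]
  rw [swi_degree_zero hn]
  have h1 : ∑ i ∈ univ.filter (fun v : Fin n => 1 ≤ v.val ∧ v.val ≤ s),
      (((starWithIsolated n r).degree i : ℝ)^2 + ((starWithIsolated n r).degree i : ℝ))
      = ∑ _i ∈ univ.filter (fun v : Fin n => 1 ≤ v.val ∧ v.val ≤ s), (2:ℝ) := by
    apply Finset.sum_congr rfl
    intro i hi
    simp only [mem_filter, mem_univ, true_and] at hi
    rw [swi_degree_leaf hn hi.1 hi.2]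
    norm_num
  have h2 : ∑ i ∈ univ.filter (fun v : Fin n => s < v.val),
      (((starWithIsolated n r).degree i : ℝ)^2 + ((starWithIsolated n r).degree i : ℝ)) = 0 := by
    apply Finset.sum_eq_zero
    intro i hi
    simp only [mem_filter, mem_univ, true_and] at hi
    rw [swi_degree_isolated hi]
    norm_num
  have hcast : ((n - r - 1 : ℕ) : ℝ) = (n:ℝ) - (r:ℝ) - 1 := by
    rw [Nat.cast_sub (by omega), Nat.cast_sub (by omega)]
    norm_num
  rw [h1, h2, Finset.sum_const, card_filter_leaves hn, nsmul_eq_mul, add_zero, hcast]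
  ring

end facts3

section facts4
variable {n r : ℕ} (hn : r + 2 ≤ n)

include hn

lemma swi_eig_mem (hL : ((starWithIsolated n r).lapMatrix ℝ).IsHermitian) (j : Fin n) :
    hL.eigenvalues j = 0 ∨ hL.eigenvalues j = 1 ∨
      hL.eigenvalues j = ((n - r - 1 : ℕ) : ℝ) + 1 := by
  set μ := hL.eigenvalues j with hμdef
  set v : Fin n → ℝ := ⇑(hL.eigenvectorBasis j) with hvdef
  have hv : (starWithIsolated n r).lapMatrix ℝ *ᵥ v = μ • v := hL.mulVec_eigenvectorBasis j
  have hvne : v ≠ 0 := by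
    have h := hL.eigenvectorBasis.orthonormal.ne_zero j
    intro h0
    apply h
    ext k
    exact congrFun h0 k
  by_contra hcon
  push_neg at hcon
  obtain ⟨hμ0, hμ1, hμs⟩ := hcon
  set z : Fin n := ⟨0, npos hn⟩ with hzdef
  have heq : ∀ k : Fin n, ((starWithIsolated n r).degree k : ℝ) * v k -
      ∑ u ∈ (starWithIsolated n r).neighborFinset k, v u = μ * v k := by
    intro k
    have h := congrFun hv k
    rw [SimpleGraph.lapMatrix_mulVec_apply] at h
    simpa using h
  have hiso : ∀ k : Fin n, n - r - 1 < k.val → v k = 0 := by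
    intro k hk
    have h := heq k
    rw [swi_degree_isolated hk, swi_neighbor_isolated hk] at h
    simp only [Nat.cast_zero, zero_mul, Finset.sum_empty, sub_zero] at h
    exact ((mul_eq_zero.mp h.symm).resolve_left hμ0)
  have h1μ : (1:ℝ) - μ ≠ 0 := sub_ne_zero.mpr (fun h => hμ1 h.symm)
  have hleaf : ∀ k : Fin n, 1 ≤ k.val → k.val ≤ n - r - 1 → v k = (1 - μ)⁻¹ * v z := by
    intro k h1 h2
    have h := heq k
    rw [swi_degree_leaf hn h1 h2, swi_neighbor_leaf hn h1 h2, Finset.sum_singleton] at h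
    have h' : v k * (1 - μ) = v z := by
      push_cast at h
      linear_combination h
    rw [← h', mul_comm (v k) (1 - μ), inv_mul_cancel_left₀ h1μ]
  have hz := heq z
  rw [swi_degree_zero hn, swi_neighbor_zero hn] at hz
  have hsum : ∑ u ∈ univ.filter (fun w : Fin n => 1 ≤ w.val ∧ w.val ≤ n - r - 1), v u
      = ((n - r - 1 : ℕ) : ℝ) * ((1 - μ)⁻¹ * v z) := by
    rw [Finset.sum_congr rfl (fun u hu => by
      simp only [mem_filter, mem_univ, true_and] at hu
      exact hleaf u hu.1 hu.2), Finset.sum_const, card_filter_leaves hn, nsmul_eq_mul]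
  rw [hsum] at hz
  have hvz : v z = 0 := by
    by_contra hvz
    have hinv : ((1:ℝ) - μ) * (1 - μ)⁻¹ = 1 := mul_inv_cancel₀ h1μ
    have hkey : μ * ((((n - r - 1 : ℕ) : ℝ) + 1) - μ) * v z = 0 := by
      linear_combination (μ - 1) * hz + (-(((n - r - 1 : ℕ) : ℝ)) * v z) * hinv
    rcases mul_eq_zero.mp hkey with h | h
    · rcases mul_eq_zero.mp h with h' | h'
      · exact hμ0 h'
      · exact hμs (by linarith)
    · exact hvz h
  apply hvne
  funext k
  rcases Nat.lt_or_ge k.val 1 with hk | hk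
  · have : k = z := Fin.ext (show k.val = 0 by omega)
    rw [this, hvz]
    rfl
  rcases Nat.lt_or_ge (n - r - 1) k.val with hk2 | hk2
  · rw [hiso k hk2]
    rfl
  · rw [hleaf k hk hk2, hvz, mul_zero]
    rfl

end facts4

lemma sum_classify {N : ℕ} (μ : Fin N → ℝ) (x y z : ℝ) (f : ℝ → ℝ)
    (hmem : ∀ j, μ j = x ∨ μ j = y ∨ μ j = z) (hxy : x ≠ y) (hxz : x ≠ z) (hyz : y ≠ z) :
    ∑ j, f (μ j) = (univ.filter (fun j => μ j = x)).card * f x +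
      (univ.filter (fun j => μ j = y)).card * f y +
      (univ.filter (fun j => μ j = z)).card * f z := by
  classical
  rw [← Finset.sum_filter_add_sum_filter_not univ (fun j => μ j = x) (fun j => f (μ j)),
    ← Finset.sum_filter_add_sum_filter_not (univ.filter (fun j => ¬ μ j = x))
      (fun j => μ j = y) (fun j => f (μ j))]
  have h1 : ∑ j ∈ univ.filter (fun j => μ j = x), f (μ j)
      = (univ.filter (fun j => μ j = x)).card * f x := by
    rw [Finset.sum_congr rfl (fun j hj => by
      simp only [mem_filter, mem_univ, true_and] at hj; rw [hj]), Finset.sum_const, nsmul_eq_mul]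
  have h2 : (univ.filter (fun j => ¬ μ j = x)).filter (fun j => μ j = y)
      = univ.filter (fun j => μ j = y) := by
    ext j
    simp only [mem_filter, mem_univ, true_and]
    constructor
    · rintro ⟨-, h⟩; exact h
    · intro h; exact ⟨by rw [h]; exact fun hh => hxy hh.symm, h⟩
  have h3 : (univ.filter (fun j => ¬ μ j = x)).filter (fun j => ¬ μ j = y)
      = univ.filter (fun j => μ j = z) := by
    ext j
    simp only [mem_filter, mem_univ, true_and]
    constructor
    · rintro ⟨h1', h2'⟩
      rcases hmem j with h | h | h
      · exact absurd h h1'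
      · exact absurd h h2'
      · exact h
    · intro h
      exact ⟨by rw [h]; exact fun hh => hxz hh.symm, by rw [h]; exact fun hh => hyz hh.symm⟩
  have h4 : ∑ j ∈ univ.filter (fun j => μ j = y), f (μ j)
      = (univ.filter (fun j => μ j = y)).card * f y := by
    rw [Finset.sum_congr rfl (fun j hj => by
      simp only [mem_filter, mem_univ, true_and] at hj; rw [hj]), Finset.sum_const, nsmul_eq_mul]
  have h5 : ∑ j ∈ univ.filter (fun j => μ j = z), f (μ j)
      = (univ.filter (fun j => μ j = z)).card * f z := by
    rw [Finset.sum_congr rfl (fun j hj => by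
      simp only [mem_filter, mem_univ, true_and] at hj; rw [hj]), Finset.sum_const, nsmul_eq_mul]
  rw [h1, h2, h3, h4, h5]
  ring

lemma card_classify {N : ℕ} (μ : Fin N → ℝ) (x y z : ℝ)
    (hmem : ∀ j, μ j = x ∨ μ j = y ∨ μ j = z) (hxy : x ≠ y) (hxz : x ≠ z) (hyz : y ≠ z) :
    N = (univ.filter (fun j => μ j = x)).card +
      (univ.filter (fun j => μ j = y)).card +
      (univ.filter (fun j => μ j = z)).card := by
  classical
  have h := sum_classify μ x y z (fun _ => (1:ℝ)) hmem hxy hxz hyz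
  simp only [Finset.sum_const, nsmul_eq_mul, mul_one, Finset.card_univ, Fintype.card_fin] at h
  exact_mod_cast h

lemma map_classify {N : ℕ} (μ : Fin N → ℝ) (x y z : ℝ)
    (hmem : ∀ j, μ j = x ∨ μ j = y ∨ μ j = z) (hxy : x ≠ y) (hxz : x ≠ z) (hyz : y ≠ z) :
    univ.val.map μ = Multiset.replicate (univ.filter (fun j => μ j = x)).card x +
      Multiset.replicate (univ.filter (fun j => μ j = y)).card y +
      Multiset.replicate (univ.filter (fun j => μ j = z)).card z := by
  classical
  ext w
  rw [Multiset.count_map, Multiset.count_add, Multiset.count_add, Multiset.count_replicate,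
    Multiset.count_replicate, Multiset.count_replicate]
  have hfil : ∀ p : ℝ, Multiset.card (univ.val.filter (fun a : Fin N => p = μ a))
      = (univ.filter (fun a : Fin N => μ a = p)).card := by
    intro p
    rw [show (univ.filter (fun a : Fin N => μ a = p)).card
        = Multiset.card ((univ.val).filter (fun a : Fin N => μ a = p)) from rfl]
    congr 1
    apply Multiset.filter_congr
    intro a _
    exact eq_comm
  rw [hfil w]
  by_cases hx : w = x
  · subst hx
    rw [if_pos rfl, if_neg (fun h => hxy h.symm), if_neg (fun h => hxz h.symm), add_zero, add_zero]
  by_cases hy : w = y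
  · subst hy
    rw [if_neg (fun h => hx h.symm), if_pos rfl, if_neg (fun h => hyz h.symm), zero_add, add_zero]
  by_cases hz : w = z
  · subst hz
    rw [if_neg (fun h => hx h.symm), if_neg (fun h => hy h.symm), if_pos rfl, zero_add, zero_add]
  · rw [if_neg (fun h => hx h.symm), if_neg (fun h => hy h.symm), if_neg (fun h => hz h.symm),
      add_zero, add_zero]
    rw [Finset.card_eq_zero]
    apply Finset.filter_eq_empty_iff.mpr
    intro j _
    rcases hmem j with h | h | h <;> rw [h]
    · exact fun hh => hx hh.symm
    · exact fun hh => hy hh.symm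
    · exact fun hh => hz hh.symm


lemma sort_rep_rep (a b : ℕ) (x : ℝ) (h0 : (0:ℝ) ≤ 1) (hx : 1 ≤ x) :
    (Multiset.replicate a (0:ℝ) + Multiset.replicate b 1 + {x}).sort (· ≤ ·)
      = List.replicate a (0:ℝ) ++ (List.replicate b 1 ++ [x]) := by
  have hco : ((List.replicate a (0:ℝ) ++ (List.replicate b 1 ++ [x]) : List ℝ) : Multiset ℝ)
      = Multiset.replicate a (0:ℝ) + Multiset.replicate b 1 + {x} := by
    rw [add_assoc]
    rfl
  have hsorted : (List.replicate a (0:ℝ) ++ (List.replicate b 1 ++ [x])).Pairwise (· ≤ ·) := by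
    rw [List.pairwise_append, List.pairwise_append]
    refine ⟨?_, ⟨?_, ?_, ?_⟩, ?_⟩
    · simp [List.pairwise_replicate]
    · simp [List.pairwise_replicate]
    · simp
    · intro u hu v hv
      rw [List.mem_replicate] at hu
      rw [List.mem_singleton] at hv
      rw [hu.2, hv]
      exact hx
    · intro u hu v hv
      rw [List.mem_replicate] at hu
      rcases List.mem_append.mp hv with hv | hv
      · rw [List.mem_replicate] at hv
        rw [hu.2, hv.2]
        exact h0
      · rw [List.mem_singleton] at hv
        rw [hu.2, hv]
        linarith
  refine List.Perm.eq_of_pairwise' (Multiset.pairwise_sort _ _) hsorted ?_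
  rw [← Multiset.coe_eq_coe, Multiset.sort_eq, hco]

lemma kth2_one (a b : ℕ) (hb : 1 ≤ b) (x : ℝ) (hx : 1 ≤ x) :
    kthLargestR (Multiset.replicate a (0:ℝ) + Multiset.replicate b 1 + {x}) 2 = 1 := by
  rw [kthLargestR, sort_rep_rep a b x (by norm_num) hx]
  obtain ⟨b', rfl⟩ : ∃ b', b = b' + 1 := ⟨b - 1, by omega⟩
  rw [List.reverse_append, List.reverse_append]
  simp only [List.reverse_replicate, List.reverse_singleton]
  rw [List.replicate_succ']
  cases b' with
  | zero => simp
  | succ k =>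
    rw [List.replicate_succ]
    simp

lemma kth2_zero (a : ℕ) (ha : 1 ≤ a) (x : ℝ) (hx : 1 ≤ x) :
    kthLargestR (Multiset.replicate a (0:ℝ) + Multiset.replicate 0 1 + {x}) 2 = 0 := by
  rw [kthLargestR, sort_rep_rep a 0 x (by norm_num) hx]
  obtain ⟨a', rfl⟩ : ∃ a', a = a' + 1 := ⟨a - 1, by omega⟩
  rw [List.reverse_append, List.reverse_append]
  simp only [List.reverse_replicate, List.reverse_singleton, List.replicate_zero]
  rw [List.replicate_succ']
  cases a' with
  | zero => simp
  | succ k =>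
    rw [List.replicate_succ]
    simp

lemma lap_iso_charpoly {n : ℕ} (G G' : SimpleGraph (Fin n)) [DecidableRel G.Adj]
    [DecidableRel G'.Adj] (f : G ≃g G') :
    (G.lapMatrix ℝ).charpoly = (G'.lapMatrix ℝ).charpoly := by
  have hdeg : ∀ i, G.degree i = G'.degree (f i) := by
    intro i
    rw [SimpleGraph.degree, SimpleGraph.degree]
    apply Finset.card_bij (fun w _ => f w)
    · intro w hw
      rw [SimpleGraph.mem_neighborFinset] at hw ⊢
      exact f.map_adj_iff.mpr hw
    · intro w _ w' _ h
      exact f.toEquiv.injective h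
    · intro u hu
      rw [SimpleGraph.mem_neighborFinset] at hu
      refine ⟨f.symm u, ?_, by simp⟩
      rw [SimpleGraph.mem_neighborFinset]
      apply f.map_adj_iff.mp
      simpa using hu
  have hmat : G.lapMatrix ℝ = (G'.lapMatrix ℝ).submatrix ⇑f ⇑f := by
    ext i j
    rw [Matrix.submatrix_apply, lap_entry, lap_entry]
    by_cases hij : i = j
    · subst hij
      rw [if_pos rfl, if_pos rfl, hdeg i, if_neg (G.irrefl), if_neg (G'.irrefl)]
    · have hfij : ¬ (f i = f j) := fun h => hij (f.toEquiv.injective h)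
      rw [if_neg hij, if_neg hfij]
      by_cases ha : G.Adj i j
      · rw [if_pos ha, if_pos (f.map_adj_iff.mpr ha)]
      · rw [if_neg ha, if_neg (fun h => ha (f.map_adj_iff.mp h))]
  rw [hmat, show (G'.lapMatrix ℝ).submatrix ⇑f ⇑f
      = Matrix.reindex f.toEquiv.symm f.toEquiv.symm (G'.lapMatrix ℝ) from rfl,
    Matrix.charpoly_reindex]

/-- For a graph `G` of order `n` with `m` edges isomorphic to
`K_{1,n-r-1} ∪ r·K₁` with `0 ≤ r ≤ ⌈n/2⌉ - 2` (i.e. `2r + 3 ≤ n`) or `r = n - 2`, one has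
`μ₂(G) < 2m/n`. -/
theorem stmt12 {n : ℕ} (G : SimpleGraph (Fin n)) [DecidableRel G.Adj] (r : ℕ)
    (hr : 2 * r + 3 ≤ n ∨ r + 2 = n) (hiso : Nonempty (G ≃g starWithIsolated n r)) :
    muL G 2 < 2 * (G.edgeFinset.card : ℝ) / n := by
  obtain ⟨f⟩ := hiso
  have hn : r + 2 ≤ n := by rcases hr with h | h <;> omega
  have hedge : G.edgeFinset.card = n - r - 1 := by
    rw [f.card_edgeFinset_eq, swi_edgecard hn]
  have hL : ((starWithIsolated n r).lapMatrix ℝ).IsHermitian :=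
    (SimpleGraph.posSemidef_lapMatrix ℝ (starWithIsolated n r)).1
  have hcp : (G.lapMatrix ℝ).charpoly = ((starWithIsolated n r).lapMatrix ℝ).charpoly :=
    lap_iso_charpoly G _ f
  set μ : Fin n → ℝ := hL.eigenvalues with hμdef
  have hcast : ((n - r - 1 : ℕ) : ℝ) = (n:ℝ) - r - 1 := by
    rw [Nat.cast_sub (by omega), Nat.cast_sub (by omega)]
    norm_num
  have hS1 : (1:ℝ) ≤ ((n - r - 1 : ℕ) : ℝ) := by
    exact_mod_cast (by omega : 1 ≤ n - r - 1)
  have hmem : ∀ j, μ j = 0 ∨ μ j = 1 ∨ μ j = ((n - r - 1 : ℕ) : ℝ) + 1 :=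
    fun j => swi_eig_mem hn hL j
  have hd01 : (0:ℝ) ≠ 1 := by norm_num
  have hd0S : (0:ℝ) ≠ ((n - r - 1 : ℕ) : ℝ) + 1 := by linarith
  have hd1S : (1:ℝ) ≠ ((n - r - 1 : ℕ) : ℝ) + 1 := by linarith
  set a := (univ.filter (fun j => μ j = 0)).card with hadef
  set b := (univ.filter (fun j => μ j = 1)).card with hbdef
  set c := (univ.filter (fun j => μ j = ((n - r - 1 : ℕ) : ℝ) + 1)).card with hcdef
  have hsum1 : (b:ℝ) + c * (((n - r - 1 : ℕ) : ℝ) + 1) = 2 * ((n - r - 1 : ℕ) : ℝ) := by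
    have h := sum_classify μ 0 1 (((n - r - 1 : ℕ) : ℝ) + 1) id hmem hd01 hd0S hd1S
    simp only [id] at h
    rw [← hadef, ← hbdef, ← hcdef] at h
    have h2 : ∑ j, μ j = 2 * ((n:ℝ) - r - 1) := by
      rw [hμdef, ← trace_eq_sum_eigs _ hL, swi_trace hn]
    rw [← hcast] at h2
    rw [h2] at h
    linarith
  have hsum2 : (b:ℝ) + c * (((n - r - 1 : ℕ) : ℝ) + 1)^2
      = ((n - r - 1 : ℕ) : ℝ)^2 + 3 * ((n - r - 1 : ℕ) : ℝ) := by
    have h := sum_classify μ 0 1 (((n - r - 1 : ℕ) : ℝ) + 1) (fun t => t^2) hmem hd01 hd0S hd1S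
    beta_reduce at h
    rw [← hadef, ← hbdef, ← hcdef] at h
    have h2 : ∑ j, (μ j)^2 = ((n:ℝ) - r - 1)^2 + 3 * ((n:ℝ) - r - 1) := by
      rw [hμdef, ← trace_sq_eq_sum_sq_eigs _ hL, swi_trace_sq hn]
    rw [← hcast] at h2
    rw [h2] at h
    rw [one_pow] at h
    linarith
  have hceq : (c:ℝ) = 1 := by
    have hne : ((n - r - 1 : ℕ) : ℝ) * (((n - r - 1 : ℕ) : ℝ) + 1) ≠ 0 := by
      have : (0:ℝ) < ((n - r - 1 : ℕ) : ℝ) * (((n - r - 1 : ℕ) : ℝ) + 1) := by nlinarith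
      exact ne_of_gt this
    apply mul_right_cancel₀ hne
    nlinarith [hsum1, hsum2]
  have hc1 : c = 1 := by exact_mod_cast hceq
  have hbR : (b:ℝ) + 1 = ((n - r - 1 : ℕ) : ℝ) := by
    rw [hceq] at hsum1
    linarith
  have hb : b = n - r - 2 := by
    have : b + 1 = n - r - 1 := by exact_mod_cast hbR
    omega
  have hcard : n = a + b + c := card_classify μ 0 1 (((n - r - 1 : ℕ) : ℝ) + 1) hmem hd01 hd0S hd1S
  have ha : a = r + 1 := by omega
  have hroots : (G.lapMatrix ℝ).charpoly.roots
      = Multiset.replicate (r+1) (0:ℝ) + Multiset.replicate (n-r-2) 1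
        + {((n - r - 1 : ℕ) : ℝ) + 1} := by
    rw [hcp, charpoly_eq_prod_eigs _ hL, roots_prod_eigs,
      map_classify μ 0 1 (((n - r - 1 : ℕ) : ℝ) + 1) hmem hd01 hd0S hd1S,
      ← hadef, ← hbdef, ← hcdef, ha, hb, hc1, Multiset.replicate_one]
  have hnR : (0:ℝ) < n := by
    have : 0 < n := by omega
    exact_mod_cast this
  rw [muL, hroots, hedge]
  rcases hr with hcase | hcase
  · rw [kth2_one (r+1) (n-r-2) (by omega) _ (by linarith)]
    rw [lt_div_iff₀ hnR, hcast, one_mul]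
    have : ((2*r+3 : ℕ) : ℝ) ≤ (n:ℝ) := by exact_mod_cast hcase
    push_cast at this
    linarith
  · have hb0 : n - r - 2 = 0 := by omega
    rw [hb0, kth2_zero (r+1) (by omega) _ (by linarith)]
    apply div_pos _ hnR
    have h1 : ((n - r - 1 : ℕ) : ℝ) = 1 := by
      rw [show n - r - 1 = 1 by omega]
      norm_num
    rw [h1]
    norm_num
end

section
/- Let Δ₁, Δ₂ be real numbers (or integers) with Δ₂ ≥ 2 and Δ₁ ≥ 2Δ₂ + 3, and let L₄ be the symmetric 4×4 matrix with rows (Δ₁, -1, -1, -1), (-1, Δ₂, -1, -1), (-1, -1, Δ₂-1, -1), (-1, -1, -1, Δ₂-1). Then the second largest eigenvalue of L₄ is strictly greater than Δ₂ + 1/2. -/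
open Finset

/-- The second largest eigenvalue (i.e. second largest root, with multiplicity, of the
characteristic polynomial) of a square real matrix. -/
noncomputable def secondLargestEig {k : ℕ} (M : Matrix (Fin k) (Fin k) ℝ) : ℝ :=
  kthLargestR M.charpoly.roots 2

/-!
With `t = Δ₁ - Δ₂ ≥ 5`, the characteristic polynomial of `L₄` takes the values `3t/8 + 1/16 > 0`,
`-3t² + 2t < 0` and `3t³ + 30t² + 95t + 96 > 0` at `Δ₂ + 1/2`, `Δ₁` and `Δ₁ + 3`. By the
intermediate value theorem it has a root in each of `(Δ₂ + 1/2, Δ₁)` and `(Δ₁, Δ₁ + 3)`, so two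
eigenvalues exceed `Δ₂ + 1/2`.
-/

open Polynomial

theorem List.lt_getD_of_lt_countP {l : List ℝ} (hl : l.Pairwise (· ≥ ·)) {c : ℝ} {n : ℕ}
    (hn : n < l.countP (c < ·)) : c < l.getD n 0 := by
  induction l generalizing n with
  | nil => simp at hn
  | cons a t ih =>
    obtain ⟨hat, ht⟩ := List.pairwise_cons.1 hl
    by_cases hca : c < a
    · rw [List.countP_cons_of_pos (by simpa using hca)] at hn
      cases n with
      | zero => simpa using hca
      | succ n => simpa using ih ht (by omega)
    · have : t.countP (c < ·) = 0 :=
        List.countP_eq_zero.2 fun x hx => by simpa using ((hat x hx).trans (not_lt.1 hca)).not_gt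
      rw [List.countP_cons_of_neg (by simpa using hca), this] at hn
      omega

theorem lt_kthLargestR_of_le_card_filter {s : Multiset ℝ} {c : ℝ} {k : ℕ} (hk : 0 < k)
    (h : k ≤ Multiset.card (s.filter (c < ·))) : c < kthLargestR s k := by
  refine List.lt_getD_of_lt_countP (List.pairwise_reverse.2 (s.pairwise_sort _)) ?_
  rw [← Multiset.coe_countP, Multiset.coe_reverse, Multiset.sort_eq,
    Multiset.countP_eq_card_filter]
  exact (Nat.sub_lt hk one_pos).trans_le h

theorem Polynomial.two_le_card_roots_filter_lt_of_sign_changes {p : ℝ[X]} (hp : p ≠ 0)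
    {a b d : ℝ} (hab : a ≤ b) (hbd : b ≤ d) (ha : 0 < p.eval a) (hb : p.eval b < 0)
    (hd : 0 < p.eval d) : 2 ≤ Multiset.card (p.roots.filter (a < ·)) := by
  obtain ⟨r₁, ⟨har₁, hr₁b⟩, hr₁⟩ :=
    intermediate_value_Ioo' hab p.continuous.continuousOn ⟨hb, ha⟩
  obtain ⟨r₂, ⟨hbr₂, -⟩, hr₂⟩ :=
    intermediate_value_Ioo hbd p.continuous.continuousOn ⟨hb, hd⟩
  have hsub : ({r₁, r₂} : Multiset ℝ) ≤ p.roots.filter (a < ·) := by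
    rw [Multiset.le_iff_subset (by simpa using (hr₁b.trans hbr₂).ne)]
    refine Multiset.cons_subset.2 ⟨?_, Multiset.singleton_subset.2 ?_⟩ <;>
      simp only [Multiset.mem_filter, mem_roots hp, IsRoot.def]
    exacts [⟨hr₁, har₁⟩, ⟨hr₂, har₁.trans (hr₁b.trans hbr₂)⟩]
  simpa using Multiset.card_le_card hsub

theorem eval_charpoly_L4 (Δ₁ Δ₂ x : ℝ) :
    (!![Δ₁, -1, -1, -1; -1, Δ₂, -1, -1; -1, -1, Δ₂ - 1, -1; -1, -1, -1, Δ₂ - 1]).charpoly.eval x =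
      x ^ 4 + (-Δ₁ - 3 * Δ₂ + 2) * x ^ 3 + (3 * Δ₁ * Δ₂ - 2 * Δ₁ + 3 * Δ₂ ^ 2 - 4 * Δ₂ - 5) * x ^ 2
        + (-3 * Δ₁ * Δ₂ ^ 2 + 4 * Δ₁ * Δ₂ + 2 * Δ₁ - Δ₂ ^ 3 + 2 * Δ₂ ^ 2 + 8 * Δ₂ + 2) * x
        + (Δ₁ * Δ₂ ^ 3 - 2 * Δ₁ * Δ₂ ^ 2 - 2 * Δ₁ * Δ₂ - 3 * Δ₂ ^ 2 - 2 * Δ₂) := by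
  rw [Matrix.eval_charpoly, Matrix.det_succ_row_zero]
  simp only [Fin.sum_univ_succ, Matrix.det_fin_three, Matrix.submatrix_apply, Fin.succAbove,
    Matrix.sub_apply, Matrix.scalar_apply, Matrix.of_apply, Matrix.cons_val', Matrix.cons_val,
    Matrix.cons_val_fin_one, Matrix.diagonal_apply, Fin.reduceSucc, Fin.reduceCastSucc, Fin.reduceLT,
    Fin.reduceEq, Fin.succ_zero_eq_one, Fin.succ_one_eq_two, Fin.castSucc_zero, Fin.castSucc_one,
    Fin.val_succ, Fin.val_zero, Fin.isValue, ite_true, ite_false, lt_self_iff_false, not_lt_zero,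
    univ_unique, sum_singleton, Fin.default_eq_zero, Fin.succ_pos]
  ring

/-- For reals `Δ₂ ≥ 2` and `Δ₁ ≥ 2Δ₂ + 3`, the second largest eigenvalue
of the matrix `L₄` is strictly greater than `Δ₂ + 1/2`. -/
theorem stmt15 (Δ₁ Δ₂ : ℝ) (h₂ : 2 ≤ Δ₂) (h₁ : 2 * Δ₂ + 3 ≤ Δ₁) :
    secondLargestEig !![Δ₁, -1, -1, -1;
                        -1, Δ₂, -1, -1;
                        -1, -1, Δ₂ - 1, -1;
                        -1, -1, -1, Δ₂ - 1] > Δ₂ + 1 / 2 := by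
  set t := Δ₁ - Δ₂
  have ht : 5 ≤ t := by linarith
  refine lt_kthLargestR_of_le_card_filter two_pos
    (two_le_card_roots_filter_lt_of_sign_changes (Matrix.charpoly_monic _).ne_zero
      (b := Δ₁) (d := Δ₁ + 3) (by linarith) (by linarith) ?_ ?_ ?_) <;> rw [eval_charpoly_L4]
  · have : 0 < 3 / 8 * t + 1 / 16 := by linarith
    linear_combination this
  · have : -3 * t ^ 2 + 2 * t < 0 := by nlinarith
    linear_combination this
  · have : 0 < 3 * t ^ 3 + 30 * t ^ 2 + 95 * t + 96 := by nlinarith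
    linear_combination this
end

section
/- Let Δ₁, Δ₂ be real numbers (or integers) with Δ₂ ≥ 2 and Δ₁ ≥ 2Δ₂ + 3, and let L₅ be the symmetric 4×4 matrix with rows (Δ₁, -1, -1, -1), (-1, Δ₂, -1, -1), (-1, -1, Δ₂-1, 0), (-1, -1, 0, Δ₂-1). Then the second largest eigenvalue of L₅ is at least Δ₂ + 1. -/
/- The characteristic polynomial of `L₅` factors as
`(x - (Δ₂ - 1)) (x - (Δ₂ + 1)) (x² - (Δ₁ + Δ₂ - 2) x + Δ₁ (Δ₂ - 2) - 3)`. The quadratic factor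
takes the value `4 Δ₂ + 5 - 4 Δ₁ < 0` at `Δ₂ + 2`, so besides `Δ₂ + 1` there is an eigenvalue
above `Δ₂ + 2`. -/

open Finset

open Polynomial

theorem List.le_getD_one_of_pairwise_ge {α : Type*} [LinearOrder α] {l : List α}
    (hl : l.Pairwise (· ≥ ·)) {a b : α} (ha : a ∈ l) (hb : b ∈ l) (hab : a < b) (d : α) :
    a ≤ l.getD 1 d := by
  match l, hl, ha, hb with
  | [x], _, ha, hb =>
    rw [List.mem_singleton] at ha hb
    exact absurd (ha.trans hb.symm) hab.ne
  | x :: y :: rest, hl, ha, hb =>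
    have hx : ∀ z ∈ x :: y :: rest, z ≤ x := by
      rintro z (_ | ⟨_, hz⟩)
      exacts [le_rfl, (List.pairwise_cons.1 hl).1 z hz]
    rcases List.mem_cons.1 ha with rfl | ha'
    · exact absurd (hx b hb) hab.not_ge
    · rcases List.mem_cons.1 ha' with rfl | ha''
      · exact le_rfl
      · exact (List.pairwise_cons.1 (List.pairwise_cons.1 hl).2).1 a ha''

theorem le_kthLargestR_two {s : Multiset ℝ} {a b : ℝ} (ha : a ∈ s) (hb : b ∈ s) (hab : a < b) :
    a ≤ kthLargestR s 2 :=
  List.le_getD_one_of_pairwise_ge (List.pairwise_reverse.2 (s.pairwise_sort _))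
    (List.mem_reverse.2 ((Multiset.mem_sort _).2 ha))
    (List.mem_reverse.2 ((Multiset.mem_sort _).2 hb)) hab 0

theorem Polynomial.Monic.exists_isRoot_gt_of_eval_neg {p : ℝ[X]} (hp : p.Monic) {x : ℝ}
    (hx : p.eval x < 0) : ∃ r, x < r ∧ p.IsRoot r := by
  have hdeg : 0 < p.degree := hp.degree_pos.2 fun h => by norm_num [h] at hx
  obtain ⟨y, hy, hxy⟩ := ((p.tendsto_atTop_of_leadingCoeff_nonneg hdeg
    (by rw [hp.leadingCoeff]; exact zero_le_one)).eventually_ge_atTop 0).and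
    (Filter.eventually_gt_atTop x) |>.exists
  obtain ⟨r, hr, hpr⟩ := intermediate_value_Icc hxy.le p.continuous.continuousOn ⟨hx.le, hy⟩
  exact ⟨r, lt_of_le_of_ne hr.1 (by rintro rfl; exact hx.ne hpr), hpr⟩

def L₅ (Δ₁ Δ₂ : ℝ) : Matrix (Fin 4) (Fin 4) ℝ :=
  !![Δ₁, -1, -1, -1;
     -1, Δ₂, -1, -1;
     -1, -1, Δ₂ - 1, 0;
     -1, -1, 0, Δ₂ - 1]

theorem eval_charpoly_L₅ (Δ₁ Δ₂ x : ℝ) :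
    (L₅ Δ₁ Δ₂).charpoly.eval x =
      (x - (Δ₂ - 1)) * (x - (Δ₂ + 1)) * (x ^ 2 - (Δ₁ + Δ₂ - 2) * x + (Δ₁ * (Δ₂ - 2) - 3)) := by
  rw [Matrix.eval_charpoly, Matrix.det_succ_row_zero]
  simp [L₅, Fin.sum_univ_succ, Matrix.det_succ_row_zero, Fin.succAbove]
  ring

/-- For reals `Δ₂ ≥ 2` and `Δ₁ ≥ 2Δ₂ + 3`, the second largest eigenvalue
of the matrix `L₅` is at least `Δ₂ + 1`. -/
theorem stmt16 (Δ₁ Δ₂ : ℝ) (h₂ : 2 ≤ Δ₂) (h₁ : 2 * Δ₂ + 3 ≤ Δ₁) :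
    secondLargestEig !![Δ₁, -1, -1, -1;
                        -1, Δ₂, -1, -1;
                        -1, -1, Δ₂ - 1, 0;
                        -1, -1, 0, Δ₂ - 1] ≥ Δ₂ + 1 := by
  change Δ₂ + 1 ≤ kthLargestR (L₅ Δ₁ Δ₂).charpoly.roots 2
  have hp := (L₅ Δ₁ Δ₂).charpoly_monic
  have hroot : (L₅ Δ₁ Δ₂).charpoly.IsRoot (Δ₂ + 1) := by
    rw [IsRoot, eval_charpoly_L₅]; ring
  have hneg : (L₅ Δ₁ Δ₂).charpoly.eval (Δ₂ + 2) < 0 := by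
    rw [eval_charpoly_L₅]; ring_nf; linarith
  obtain ⟨r, hr, hroot'⟩ := hp.exists_isRoot_gt_of_eval_neg hneg
  exact le_kthLargestR_two ((mem_roots hp.ne_zero).2 hroot) ((mem_roots hp.ne_zero).2 hroot')
    (by linarith)
end

section
/- Let Δ₁ > Δ₂ ≥ 2 be integers and consider the symmetric 3×3 matrix L₁ with rows (Δ₁, -1, -1), (-1, Δ₂, -1), (-1, -1, Δ₂). Then the eigenvalues of L₁ are (Δ₁ + Δ₂ - 1)/2 ± (1/2)·√((Δ₁ - Δ₂)(Δ₁ - Δ₂ + 2) + 9) and Δ₂ + 1; in particular the second largest eigenvalue of L₁ equals Δ₂ + 1. -/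
open Finset

/-!
Expanding the determinant, the characteristic polynomial of `L₁` is `X - (Δ₂ + 1)` times a
quadratic with discriminant `(t + 1)² + 8 = t (t + 2) + 9`, where `t = Δ₁ - Δ₂`. For `t ≥ 0` this
discriminant is at least `(t - 3)²`, which is exactly what places `Δ₂ + 1` between the two roots of
the quadratic, making it the middle eigenvalue.
-/

open Polynomial

lemma kthLargestR_two_of_le {x y z : ℝ} (hxy : x ≤ y) (hyz : y ≤ z) :
    kthLargestR {x, y, z} 2 = y := by
  have hsort : Multiset.sort ({x, y, z} : Multiset ℝ) (· ≤ ·) = [x, y, z] := by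
    rw [Multiset.insert_eq_cons, Multiset.sort_cons, Multiset.insert_eq_cons,
      Multiset.sort_cons, Multiset.sort_singleton] <;> simp [*, hxy.trans hyz]
  rw [kthLargestR, hsort]; rfl

lemma abs_sub_three_le_sqrt {t : ℝ} (ht : 0 ≤ t) : |t - 3| ≤ √(t * (t + 2) + 9) :=
  Real.abs_le_sqrt (by nlinarith)

lemma charpoly_L₁_eq_prod_X_sub_C (a b : ℝ) :
    (Matrix.charpoly !![a, -1, -1; -1, b, -1; -1, -1, b]) =
      (({(a + b - 1) / 2 + √((a - b) * (a - b + 2) + 9) / 2,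
          (a + b - 1) / 2 - √((a - b) * (a - b + 2) + 9) / 2, b + 1} : Multiset ℝ).map
        (fun r => X - C r)).prod := by
  have hs : √((a - b) * (a - b + 2) + 9) ^ 2 = (a - b) * (a - b + 2) + 9 :=
    Real.sq_sqrt (by nlinarith [sq_nonneg (a - b + 1)])
  refine Polynomial.funext fun x => ?_
  rw [Matrix.charpoly, Matrix.det_fin_three]
  simp
  linear_combination (x / 4 - b / 4 - 1 / 4) * hs

lemma roots_charpoly_L₁ (a b : ℝ) :
    (Matrix.charpoly !![a, -1, -1; -1, b, -1; -1, -1, b]).roots =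
      {(a + b - 1) / 2 + √((a - b) * (a - b + 2) + 9) / 2,
        (a + b - 1) / 2 - √((a - b) * (a - b + 2) + 9) / 2, b + 1} := by
  rw [charpoly_L₁_eq_prod_X_sub_C, roots_multiset_prod_X_sub_C]

theorem stmt19_general (Δ₁ Δ₂ : ℤ) (h₁ : Δ₂ < Δ₁) :
    (Matrix.charpoly !![(Δ₁ : ℝ), -1, -1;
                        -1, (Δ₂ : ℝ), -1;
                        -1, -1, (Δ₂ : ℝ)]).roots =
        {((Δ₁ : ℝ) + (Δ₂ : ℝ) - 1) / 2 +
            Real.sqrt (((Δ₁ : ℝ) - Δ₂) * ((Δ₁ : ℝ) - Δ₂ + 2) + 9) / 2,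
          ((Δ₁ : ℝ) + (Δ₂ : ℝ) - 1) / 2 -
            Real.sqrt (((Δ₁ : ℝ) - Δ₂) * ((Δ₁ : ℝ) - Δ₂ + 2) + 9) / 2,
          (Δ₂ : ℝ) + 1} ∧
      secondLargestEig !![(Δ₁ : ℝ), -1, -1;
                          -1, (Δ₂ : ℝ), -1;
                          -1, -1, (Δ₂ : ℝ)] = (Δ₂ : ℝ) + 1 := by
  have hgap : (0 : ℝ) ≤ Δ₁ - Δ₂ := sub_nonneg.mpr (by exact_mod_cast h₁.le)
  obtain ⟨hlow, hhigh⟩ := abs_le.mp (abs_sub_three_le_sqrt hgap)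
  have hrotate (x y z : ℝ) : ({x, y, z} : Multiset ℝ) = {y, z, x} := by
    rw [Multiset.pair_comm z x]; exact Multiset.cons_swap x y {z}
  refine ⟨roots_charpoly_L₁ _ _, ?_⟩
  rw [secondLargestEig, roots_charpoly_L₁, hrotate, kthLargestR_two_of_le] <;> linarith

/-- For integers `Δ₁ > Δ₂ ≥ 2`, the eigenvalues of the matrix `L₁` are
`(Δ₁ + Δ₂ - 1)/2 ± (1/2)·√((Δ₁ - Δ₂)(Δ₁ - Δ₂ + 2) + 9)` and `Δ₂ + 1`; in particular the
second largest eigenvalue of `L₁` equals `Δ₂ + 1`. -/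
theorem stmt19 (Δ₁ Δ₂ : ℤ) (h₂ : 2 ≤ Δ₂) (h₁ : Δ₂ < Δ₁) :
    (Matrix.charpoly !![(Δ₁ : ℝ), -1, -1;
                        -1, (Δ₂ : ℝ), -1;
                        -1, -1, (Δ₂ : ℝ)]).roots =
        {((Δ₁ : ℝ) + (Δ₂ : ℝ) - 1) / 2 +
            Real.sqrt (((Δ₁ : ℝ) - Δ₂) * ((Δ₁ : ℝ) - Δ₂ + 2) + 9) / 2,
          ((Δ₁ : ℝ) + (Δ₂ : ℝ) - 1) / 2 -
            Real.sqrt (((Δ₁ : ℝ) - Δ₂) * ((Δ₁ : ℝ) - Δ₂ + 2) + 9) / 2,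
          (Δ₂ : ℝ) + 1} ∧
      secondLargestEig !![(Δ₁ : ℝ), -1, -1;
                          -1, (Δ₂ : ℝ), -1;
                          -1, -1, (Δ₂ : ℝ)] = (Δ₂ : ℝ) + 1 :=
  stmt19_general Δ₁ Δ₂ h₁
end
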